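/- arXiv:1708.08633 — 2 statements merged into one kernel-verified Lean document; each statement's English description precedes it below -/
import Mathlib

section
/- There exists a 2×2 complex matrix T and complex numbers u, v with |u| ≤ 1, |v| ≤ 1 such that ‖[[v, v−u],[0,u]]‖ = 1 + √2; namely u = −1, v = 1 gives the matrix [[1,2],[0,−1]] of norm 1 + √2. -/
/-!
Let `M = [[1, 2], [0, -1]]`. Since `|x₀ + 2 x₁| ≤ |x₀| + 2|x₁|`, the bound `‖M x‖ ≤ (1 + √2)‖x‖`
reduces to the real inequality `(p + 2q)² + q² ≤ (1 + √2)²(p² + q²)`, whose defect is the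
square `2(√2 - 1)((1 + √2)p - q)²`. Equality is attained at `x = (1, 1 + √2)`, since
`M x = (1 + √2) • (1 + √2, -1)` and `(1 + √2, -1)` has the same norm as `x`.
-/

open Matrix

theorem ContinuousLinearMap.opNorm_eq_of_bound_of_norm_apply_eq {𝕜 E F : Type*}
    [NontriviallyNormedField 𝕜] [NormedAddCommGroup E] [NormedSpace 𝕜 E]
    [SeminormedAddCommGroup F] [NormedSpace 𝕜 F] (f : E →L[𝕜] F) {c : ℝ}
    (hle : ∀ x, ‖f x‖ ≤ c * ‖x‖) {x₀ : E} (hx₀ : x₀ ≠ 0) (heq : ‖f x₀‖ = c * ‖x₀‖) :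
    ‖f‖ = c := by
  have hx₀ : 0 < ‖x₀‖ := norm_pos_iff.mpr hx₀
  have hc : 0 ≤ c := nonneg_of_mul_nonneg_left (heq ▸ norm_nonneg _) hx₀
  exact le_antisymm (f.opNorm_le_bound hc hle)
    (le_of_mul_le_mul_right (heq ▸ f.le_opNorm x₀) hx₀)

theorem Matrix.toEuclideanCLM_fin_two_apply {𝕜 : Type*} [RCLike 𝕜] (a b c d : 𝕜)
    (x : EuclideanSpace 𝕜 (Fin 2)) :
    toEuclideanCLM (𝕜 := 𝕜) (n := Fin 2) !![a, b; c, d] x =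
      !₂[a * x 0 + b * x 1, c * x 0 + d * x 1] := by
  ext i
  fin_cases i <;> simp [mulVec, dotProduct, Fin.sum_univ_two]

theorem EuclideanSpace.norm_sq_fin_two {𝕜 : Type*} [RCLike 𝕜] (x : EuclideanSpace 𝕜 (Fin 2)) :
    ‖x‖ ^ 2 = ‖x 0‖ ^ 2 + ‖x 1‖ ^ 2 := by
  rw [EuclideanSpace.norm_sq_eq, Fin.sum_univ_two]

theorem sq_add_two_mul_add_sq_le (p q : ℝ) :
    (p + 2 * q) ^ 2 + q ^ 2 ≤ (1 + √2) ^ 2 * (p ^ 2 + q ^ 2) := by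
  have h2 : √2 ^ 2 = 2 := Real.sq_sqrt zero_le_two
  have hdefect : (1 + √2) ^ 2 * (p ^ 2 + q ^ 2) - ((p + 2 * q) ^ 2 + q ^ 2) =
      2 * (√2 - 1) * ((1 + √2) * p - q) ^ 2 := by
    linear_combination (-(2 * √2 + 1) * p ^ 2 + 4 * p * q + q ^ 2) * h2
  have hnonneg : 0 ≤ 2 * (√2 - 1) * ((1 + √2) * p - q) ^ 2 :=
    mul_nonneg (mul_nonneg zero_le_two (sub_nonneg.mpr (Real.one_le_sqrt.mpr one_le_two)))
      (sq_nonneg _)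
  linarith

section

local notation "M" => toEuclideanCLM (𝕜 := ℂ) (n := Fin 2) !![1, 2; 0, -1]

theorem norm_M_apply_le (x : EuclideanSpace ℂ (Fin 2)) : ‖M x‖ ≤ (1 + √2) * ‖x‖ := by
  have htri : ‖x 0 + 2 * x 1‖ ≤ ‖x 0‖ + 2 * ‖x 1‖ :=
    (norm_add_le _ _).trans_eq (by rw [norm_mul, Complex.norm_two])
  refine le_of_sq_le_sq ?_ (by positivity)
  rw [mul_pow, EuclideanSpace.norm_sq_fin_two, EuclideanSpace.norm_sq_fin_two,
    toEuclideanCLM_fin_two_apply]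
  simp only [cons_val_zero, cons_val_one, one_mul, zero_mul, zero_add, neg_one_mul, norm_neg]
  exact le_trans (by gcongr) (sq_add_two_mul_add_sq_le _ _)

theorem norm_M_apply_extremal :
    ‖M !₂[1, ((1 + √2 : ℝ) : ℂ)]‖ = (1 + √2) * ‖!₂[(1 : ℂ), ((1 + √2 : ℝ) : ℂ)]‖ := by
  have h2 : ((√2 : ℝ) : ℂ) ^ 2 = 2 := by exact_mod_cast Real.sq_sqrt zero_le_two
  have hrotate : M !₂[1, ((1 + √2 : ℝ) : ℂ)] = ((1 + √2 : ℝ) : ℂ) • !₂[((1 + √2 : ℝ) : ℂ), -1] := by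
    rw [toEuclideanCLM_fin_two_apply]
    ext i
    fin_cases i
    · simp only [Fin.zero_eta, PiLp.smul_apply, smul_eq_mul, cons_val_zero, Complex.ofReal_add,
        Complex.ofReal_one, cons_val_one, cons_val_fin_one, one_mul]
      linear_combination -h2
    · simp
  rw [hrotate, norm_smul, Complex.norm_real, Real.norm_of_nonneg (by positivity)]
  congr 1
  rw [← sq_eq_sq₀ (norm_nonneg _) (norm_nonneg _), EuclideanSpace.norm_sq_fin_two,
    EuclideanSpace.norm_sq_fin_two]
  simp
  ring

end

theorem stmt_10 :
    ∃ u v : ℂ, ‖u‖ ≤ 1 ∧ ‖v‖ ≤ 1 ∧ u = -1 ∧ v = 1 ∧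
      ‖Matrix.toEuclideanCLM (𝕜 := ℂ) (n := Fin 2) !![v, v - u; 0, u]‖ = 1 + Real.sqrt 2 := by
  refine ⟨-1, 1, by simp, by simp, rfl, rfl, ?_⟩
  rw [show (1 : ℂ) - -1 = 2 by norm_num]
  exact ContinuousLinearMap.opNorm_eq_of_bound_of_norm_apply_eq _ norm_M_apply_le
    (by simp) norm_M_apply_extremal
end

section
/- Let H be a Hilbert space and Φ : A → B(H) a bounded unital homomorphism from a unital Banach algebra A, with ‖Φ‖ = K. If for each f in the closed unit ball of A there is g in the closed unit ball with ‖Φ(f) + Φ(g)*‖ ≤ 2, then for every f ∈ A, ‖Φ(f)‖ ≤ (1+√2)‖f‖. -/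
/-!
Write `M = ‖Φ‖`, take `f` in the unit ball with its partner `g`, and put `T = Φ f`,
`E = T + (Φ g)*`, `X = T*T`. Multiplicativity gives `X = E*T - Φ(g f)`, which by induction yields
`‖Φ(a) Xⁿ‖ ≤ M (2M + 1)ⁿ` for all `a` in the unit ball; as `Xⁿ⁺¹ = T* (T Xⁿ)`, the powers of `X`
grow at most like `(2M + 1)ⁿ`. The self-adjoint `X` has norm equal to its spectral radius, so
`‖T‖² = ‖X‖ ≤ 2M + 1`. Hence `M² ≤ 2M + 1`, i.e. `M ≤ 1 + √2`.
-/

open Filter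

lemma le_of_frequently_pow_le_mul_pow {x r C : ℝ} (hr : 0 < r)
    (h : ∃ᶠ n in atTop, x ^ n ≤ C * r ^ n) : x ≤ r := by
  by_contra! hrx
  have hgrowth : Tendsto (fun n : ℕ => (x / r) ^ n) atTop atTop :=
    tendsto_pow_atTop_atTop_of_one_lt ((one_lt_div hr).2 hrx)
  obtain ⟨n, hn, hCn⟩ := (h.and_eventually (hgrowth.eventually_gt_atTop C)).exists
  rw [div_pow, lt_div_iff₀ (pow_pos hr n)] at hCn
  linarith

lemma IsSelfAdjoint.norm_le_of_eventually_norm_pow_le {E : Type*} [NormedRing E] [StarRing E]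
    [CStarRing E] {a : E} (ha : IsSelfAdjoint a) {r C : ℝ} (hr : 0 < r)
    (h : ∀ᶠ n in atTop, ‖a ^ n‖ ≤ C * r ^ n) : ‖a‖ ≤ r := by
  have hpow : Tendsto (fun k : ℕ => 2 ^ k) atTop atTop :=
    tendsto_pow_atTop_atTop_of_one_lt one_lt_two
  refine le_of_frequently_pow_le_mul_pow (C := C) hr (hpow.frequently (Eventually.frequently ?_))
  filter_upwards [hpow.eventually h] with k hk
  rwa [ha.norm_pow_two_pow] at hk

lemma le_one_add_sqrt_two_of_sq_le {x : ℝ} (h : x ^ 2 ≤ 2 * x + 1) : x ≤ 1 + √2 := by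
  have : |x - 1| ≤ √2 := Real.abs_le_sqrt (by linarith)
  linarith [le_abs_self (x - 1)]

section

variable {A H : Type*} [NormedRing A] [NormedAlgebra ℂ A]
  [NormedAddCommGroup H] [InnerProductSpace ℂ H] [CompleteSpace H]

lemma norm_map_mul_star_mul_self_pow_le {Φ : A →L[ℂ] (H →L[ℂ] H)}
    (hmul : ∀ a b : A, Φ (a * b) = Φ a * Φ b) {f g : A} (hf : ‖f‖ ≤ 1) (hg : ‖g‖ ≤ 1) {c : ℝ}
    (hc : ‖Φ f + ContinuousLinearMap.adjoint (Φ g)‖ ≤ c) (n : ℕ) {a : A} (ha : ‖a‖ ≤ 1) :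
    ‖Φ a * (star (Φ f) * Φ f) ^ n‖ ≤ ‖Φ‖ * (c * ‖Φ‖ + 1) ^ n := by
  induction n generalizing a with
  | zero => simpa using Φ.unit_le_opNorm a ha
  | succ n ih =>
    set E := Φ f + ContinuousLinearMap.adjoint (Φ g)
    have hstarE : star E = star (Φ f) + Φ g := by
      rw [star_add, ← ContinuousLinearMap.star_eq_adjoint, star_star]
    have hexpand : Φ a * (star (Φ f) * Φ f) ^ (n + 1) =
        (Φ a * star E) * (Φ f * (star (Φ f) * Φ f) ^ n) -
          Φ (a * (g * f)) * (star (Φ f) * Φ f) ^ n := by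
      rw [pow_succ', hstarE, hmul, hmul]
      noncomm_ring
    have hagf : ‖a * (g * f)‖ ≤ 1 := by
      simpa using norm_mul_le_of_le ha (norm_mul_le_of_le hg hf)
    have hΦaE : ‖Φ a * star E‖ ≤ ‖Φ‖ * c :=
      norm_mul_le_of_le (Φ.unit_le_opNorm a ha) (by rwa [norm_star])
    calc ‖Φ a * (star (Φ f) * Φ f) ^ (n + 1)‖
        ≤ ‖Φ‖ * c * (‖Φ‖ * (c * ‖Φ‖ + 1) ^ n) + ‖Φ‖ * (c * ‖Φ‖ + 1) ^ n := by
          rw [hexpand]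
          exact (norm_sub_le _ _).trans
            (add_le_add (norm_mul_le_of_le hΦaE (ih hf)) (ih hagf))
      _ = ‖Φ‖ * (c * ‖Φ‖ + 1) ^ (n + 1) := by ring

lemma norm_map_sq_le_of_norm_add_adjoint_le {Φ : A →L[ℂ] (H →L[ℂ] H)}
    (hmul : ∀ a b : A, Φ (a * b) = Φ a * Φ b) {f g : A} (hf : ‖f‖ ≤ 1) (hg : ‖g‖ ≤ 1) {c : ℝ}
    (hc : ‖Φ f + ContinuousLinearMap.adjoint (Φ g)‖ ≤ c) :
    ‖Φ f‖ ^ 2 ≤ c * ‖Φ‖ + 1 := by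
  set X := star (Φ f) * Φ f
  have hr : 1 ≤ c * ‖Φ‖ + 1 := by
    have := mul_nonneg ((norm_nonneg _).trans hc) (norm_nonneg Φ)
    linarith
  have hΦf : ‖Φ f‖ ≤ ‖Φ‖ := Φ.unit_le_opNorm f hf
  have hXpow : ∀ᶠ n in atTop, ‖X ^ n‖ ≤ ‖Φ‖ ^ 2 * (c * ‖Φ‖ + 1) ^ n := by
    filter_upwards [eventually_ge_atTop 1] with n hn
    obtain ⟨m, rfl⟩ := Nat.exists_eq_add_of_le' hn
    calc ‖X ^ (m + 1)‖ = ‖star (Φ f) * (Φ f * X ^ m)‖ := by rw [pow_succ', mul_assoc]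
      _ ≤ ‖Φ‖ * (‖Φ‖ * (c * ‖Φ‖ + 1) ^ m) :=
        norm_mul_le_of_le (by rwa [norm_star])
          (norm_map_mul_star_mul_self_pow_le hmul hf hg hc m hf)
      _ ≤ ‖Φ‖ ^ 2 * (c * ‖Φ‖ + 1) ^ (m + 1) := by
        rw [← mul_assoc, ← sq]
        exact mul_le_mul_of_nonneg_left (pow_le_pow_right₀ hr m.le_succ) (sq_nonneg _)
  calc ‖Φ f‖ ^ 2 = ‖X‖ := by rw [sq, CStarRing.norm_star_mul_self]
    _ ≤ c * ‖Φ‖ + 1 :=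
      (IsSelfAdjoint.star_mul_self (Φ f)).norm_le_of_eventually_norm_pow_le (by linarith) hXpow

lemma opNorm_sq_le_of_forall_norm_add_adjoint_le {Φ : A →L[ℂ] (H →L[ℂ] H)}
    (hmul : ∀ a b : A, Φ (a * b) = Φ a * Φ b) {c : ℝ}
    (h : ∀ f : A, ‖f‖ ≤ 1 → ∃ g : A, ‖g‖ ≤ 1 ∧ ‖Φ f + ContinuousLinearMap.adjoint (Φ g)‖ ≤ c) :
    ‖Φ‖ ^ 2 ≤ c * ‖Φ‖ + 1 := by
  have hsqrt : ‖Φ‖ ≤ √(c * ‖Φ‖ + 1) := by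
    refine ContinuousLinearMap.opNorm_le_of_unit_norm (Real.sqrt_nonneg _) fun f hf => ?_
    obtain ⟨g, hg, hc⟩ := h f hf.le
    exact Real.le_sqrt_of_sq_le (norm_map_sq_le_of_norm_add_adjoint_le hmul hf.le hg hc)
  obtain ⟨g, -, hc⟩ := h 0 (by simp)
  have hc0 : 0 ≤ c := (norm_nonneg _).trans hc
  exact (Real.le_sqrt (norm_nonneg Φ) (by positivity)).1 hsqrt

end

theorem stmt_11_general {A : Type*} [NormedRing A] [NormedAlgebra ℂ A]
    {H : Type*} [NormedAddCommGroup H] [InnerProductSpace ℂ H] [CompleteSpace H]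
    (Φ : A →L[ℂ] (H →L[ℂ] H))
    (hmul : ∀ a b : A, Φ (a * b) = Φ a * Φ b)
    (h : ∀ f : A, ‖f‖ ≤ 1 → ∃ g : A, ‖g‖ ≤ 1 ∧
      ‖Φ f + ContinuousLinearMap.adjoint (Φ g)‖ ≤ 2) :
    ∀ f : A, ‖Φ f‖ ≤ (1 + Real.sqrt 2) * ‖f‖ :=
  Φ.le_of_opNorm_le <|
    le_one_add_sqrt_two_of_sq_le (opNorm_sq_le_of_forall_norm_add_adjoint_le hmul h)

theorem stmt_11 {A : Type*} [NormedRing A] [NormedAlgebra ℂ A] [NormOneClass A]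
    {H : Type*} [NormedAddCommGroup H] [InnerProductSpace ℂ H] [CompleteSpace H]
    (Φ : A →L[ℂ] (H →L[ℂ] H))
    (hmul : ∀ a b : A, Φ (a * b) = Φ a * Φ b)
    (hone : Φ 1 = 1)
    (h : ∀ f : A, ‖f‖ ≤ 1 → ∃ g : A, ‖g‖ ≤ 1 ∧
      ‖Φ f + ContinuousLinearMap.adjoint (Φ g)‖ ≤ 2) :
    ∀ f : A, ‖Φ f‖ ≤ (1 + Real.sqrt 2) * ‖f‖ :=
  stmt_11_general Φ hmul h
end
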